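/- arXiv:1411.7654 — 3 statements merged into one kernel-verified Lean document; each statement's English description precedes it below -/
import Mathlib

section
/- Let X be a set equipped with topologies t₁, …, tₙ such that for every choice of nonempty sets U₁, …, Uₙ with Uᵢ open in tᵢ, the intersection U₁ ∩ ⋯ ∩ Uₙ is nonempty. Then for every r ≥ 1 and every choice of nonempty sets V₁, …, Vₙ ⊆ X^r with Vᵢ open in the r-fold product topology of tᵢ, the intersection V₁ ∩ ⋯ ∩ Vₙ is nonempty. -/
/-- If finitely many topologies on X satisfy the approximation property (any finite
family of nonempty open sets, one for each topology, has nonempty intersection), then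
the same holds for the product topologies on X^r. -/
theorem stmt_1 {X : Type*} {n : ℕ} (t : Fin n → TopologicalSpace X)
    (h : ∀ U : Fin n → Set X,
      (∀ i, (U i).Nonempty ∧ @IsOpen X (t i) (U i)) → (⋂ i, U i).Nonempty)
    (r : ℕ) (hr : 1 ≤ r) (V : Fin n → Set (Fin r → X))
    (hV : ∀ i, (V i).Nonempty ∧
      @IsOpen (Fin r → X) (@Pi.topologicalSpace (Fin r) (fun _ => X) (fun _ => t i)) (V i)) :
    (⋂ i, V i).Nonempty := by
  classical
  have key : ∀ i, ∃ W : Fin r → Set X,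
      (∀ k, (W k).Nonempty ∧ @IsOpen X (t i) (W k)) ∧
      (∀ g : Fin r → X, (∀ k, g k ∈ W k) → g ∈ V i) := by
    intro i
    obtain ⟨⟨f, hf⟩, hopen⟩ := hV i
    obtain ⟨I, u, hu, hsub⟩ :=
      (@isOpen_pi_iff (Fin r) (fun _ => X) (fun _ => t i) (V i)).mp hopen f hf
    refine ⟨fun k => if k ∈ I then u k else Set.univ, ?_, ?_⟩
    · intro k
      by_cases hk : k ∈ I
      · simp only [hk, if_true]
        exact ⟨⟨f k, (hu k hk).2⟩, (hu k hk).1⟩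
      · simp only [hk, if_false]
        exact ⟨⟨f k, trivial⟩, @isOpen_univ X (t i)⟩
    · intro g hg
      apply hsub
      intro k hk
      have hk' : k ∈ I := hk; simpa only [if_pos hk'] using hg k
  choose W hW1 hW2 using key
  have hy : ∀ k, (⋂ i, W i k).Nonempty := fun k => h (fun i => W i k) (fun i => hW1 i k)
  choose y hy using hy
  refine ⟨y, Set.mem_iInter.2 fun i => hW2 i y fun k => ?_⟩
  exact Set.mem_iInter.1 (hy k) i
end

section
/- Let p be an odd prime and let a ∈ ℚ_p. Then a belongs to ℤ_p (i.e. the p-adic valuation of a is ≥ 0) if and only if 1 + p·a² is a square in ℚ_p. -/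
/-!
If `‖a‖ ≤ 1` then `1 + p a²` is congruent to `1` modulo `p`, and since `p` is odd, Hensel's lemma
lifts the square root `1` of `1` to a square root of `1 + p a²`. If `‖a‖ > 1` then
`v(1 + p a²) = v(p a²) = 1 + 2 v(a)` is odd, whereas squares have even valuation.
-/

open Polynomial

namespace PadicInt

variable {p : ℕ} [Fact p.Prime]

lemma norm_two_eq_one (hp : p ≠ 2) : ‖(2 : ℤ_[p])‖ = 1 := by
  exact_mod_cast norm_natCast_eq_one_iff.mpr ((Nat.coprime_primes Fact.out Nat.prime_two).mpr hp)

lemma isSquare_of_norm_sub_one_lt_one (hp : p ≠ 2) {x : ℤ_[p]} (hx : ‖x - 1‖ < 1) :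
    IsSquare x := by
  -- Hensel's lemma for `X ^ 2 - x` at the approximate root `1`; the derivative `2` is a unit.
  have hderiv : derivative (X ^ 2 - C x) = C 2 * X := by simp [derivative_pow]
  obtain ⟨z, hz, -⟩ := hensels_lemma (p := p) (F := X ^ 2 - C x) (a := 1) (by
    simpa [hderiv, norm_two_eq_one hp, norm_sub_rev] using hx)
  refine ⟨z, ?_⟩
  simpa [sub_eq_zero, sq, eq_comm] using hz

end PadicInt

namespace Padic

variable {p : ℕ} [Fact p.Prime]

lemma isSquare_of_norm_sub_one_lt_one (hp : p ≠ 2) {x : ℚ_[p]} (hx : ‖x - 1‖ < 1) :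
    IsSquare x := by
  have hx1 : ‖x‖ ≤ 1 := by
    simpa using (nonarchimedean (x - 1) 1).trans (max_le hx.le norm_one.le)
  obtain ⟨r, hr⟩ := PadicInt.isSquare_of_norm_sub_one_lt_one (x := ⟨x, hx1⟩) hp hx
  exact ⟨r, by simpa using congrArg ((↑) : ℤ_[p] → ℚ_[p]) hr⟩

lemma valuation_eq_of_norm_eq {x y : ℚ_[p]} (hx : x ≠ 0) (hy : y ≠ 0) (h : ‖x‖ = ‖y‖) :
    x.valuation = y.valuation := by
  rw [norm_eq_zpow_neg_valuation hx, norm_eq_zpow_neg_valuation hy] at h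
  have hp1 : (1 : ℝ) < p := mod_cast (Fact.out : p.Prime).one_lt
  exact neg_injective ((zpow_right_strictMono₀ hp1).injective h)

lemma valuation_one_add_of_valuation_neg {y : ℚ_[p]} (hy : y.valuation < 0) :
    (1 + y).valuation = y.valuation := by
  have hy1 : 1 < ‖y‖ := by simpa using (norm_le_one_iff_val_nonneg y).not.mpr hy.not_ge
  have hnorm : ‖1 + y‖ = ‖y‖ := by
    rw [add_eq_max_of_ne (by rw [norm_one]; exact hy1.ne), norm_one, max_eq_right hy1.le]
  have hy0 : y ≠ 0 := norm_pos_iff.mp (one_pos.trans hy1)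
  exact valuation_eq_of_norm_eq (norm_ne_zero_iff.mp (hnorm ▸ norm_ne_zero_iff.mpr hy0)) hy0 hnorm

lemma even_valuation_of_isSquare {x : ℚ_[p]} (hx : IsSquare x) : Even x.valuation := by
  obtain ⟨r, rfl⟩ := hx
  rcases eq_or_ne r 0 with rfl | hr
  · simp
  · exact ⟨r.valuation, valuation_mul hr hr⟩

end Padic

/-- For an odd prime p, a ∈ ℚ_p lies in ℤ_p iff 1 + p·a² is a square in ℚ_p. -/
theorem stmt_9 (p : ℕ) [Fact p.Prime] (hp : Odd p) (a : ℚ_[p]) :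
    ‖a‖ ≤ 1 ↔ IsSquare (1 + (p : ℚ_[p]) * a ^ 2) := by
  constructor
  · intro ha
    apply Padic.isSquare_of_norm_sub_one_lt_one (hp.ne_two_of_dvd_nat dvd_rfl)
    have hp1 : (1 : ℝ) < p := mod_cast (Fact.out : p.Prime).one_lt
    calc ‖1 + (p : ℚ_[p]) * a ^ 2 - 1‖ = (p : ℝ)⁻¹ * ‖a‖ ^ 2 := by simp
      _ ≤ (p : ℝ)⁻¹ := mul_le_of_le_one_right (by positivity) (pow_le_one₀ (norm_nonneg a) ha)
      _ < 1 := inv_lt_one_of_one_lt₀ hp1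
  · intro hsq
    by_contra ha
    have hva : a.valuation < 0 := by simpa using (Padic.norm_le_one_iff_val_nonneg a).not.mp ha
    have ha0 : a ≠ 0 := by rintro rfl; simp at hva
    have hval : ((p : ℚ_[p]) * a ^ 2).valuation = 1 + 2 * a.valuation := by
      rw [Padic.valuation_mul (by exact_mod_cast (Fact.out : p.Prime).ne_zero) (pow_ne_zero 2 ha0),
        Padic.valuation_p, Padic.valuation_pow]
      norm_num
    have heven := Padic.even_valuation_of_isSquare hsq
    rw [Padic.valuation_one_add_of_valuation_neg (by omega), hval] at heven
    exact Int.not_even_iff_odd.mpr ⟨a.valuation, by ring⟩ heven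
end

section
/- Let Γ be a linearly ordered abelian group, M a field equipped with a valuation v : M → Γ'₀ (with value group Γ'), and let F = HahnSeries Γ M be the field of Hahn series over M with exponents in Γ. Define w on F \ {0} by w(f) = (v(c), γ₀) ∈ Lex(Γ × Γ'), where γ₀ is the minimal element of the support of f and c is its coefficient, with the lexicographic order in which the Γ-coordinate dominates. Then w is a valuation on F extending v (via constant series), with value group Γ ×_lex Γ'. -/
/-!
Put `w f = (ord f, v (lc f))`, and `w 0 = ⊤`. Order and leading coefficient of Hahn series are
multiplicative, so `w` is. For the ultrametric inequality: if `f` and `g` have different orders,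
`f + g` has the order and leading coefficient of the lower-order summand; if the orders agree and
the leading terms do not cancel, the leading coefficients add and `v` is ultrametric; if they
cancel, the order of `f + g` jumps up, which dominates lexicographically. That last case needs
`v (lc f) ≠ ⊤`, i.e. that `v` has trivial support, which holds because `M` is a division ring.
-/

namespace WithTop

variable {α β : Type*}

def lexProd (a : WithTop α) (b : WithTop β) : WithTop (α ×ₗ β) :=
  map₂ (fun a b => toLex (a, b)) a b

@[simp]
theorem lexProd_top_left (b : WithTop β) : lexProd (⊤ : WithTop α) b = ⊤ := rfl

@[simp]
theorem lexProd_top_right (a : WithTop α) : lexProd a (⊤ : WithTop β) = ⊤ := by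
  cases a <;> rfl

theorem lexProd_coe_left (a : α) (b : WithTop β) :
    lexProd (a : WithTop α) b = b.map fun b => toLex (a, b) := rfl

@[simp]
theorem lexProd_coe_coe (a : α) (b : β) :
    lexProd (a : WithTop α) (b : WithTop β) = (toLex (a, b) : α ×ₗ β) := rfl

theorem lexProd_add [Add α] [Add β] (a a' : WithTop α) (b b' : WithTop β) :
    lexProd (a + a') (b + b') = lexProd a b + lexProd a' b' := by
  cases a <;> cases a' <;> cases b <;> cases b' <;> simp [← coe_add]; rfl

theorem lexProd_zero [Zero α] [Zero β] : lexProd (0 : WithTop α) (0 : WithTop β) = 0 := rfl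

variable [LinearOrder α] [LinearOrder β]

theorem lexProd_mono_right (a : WithTop α) : Monotone (lexProd (β := β) a) := by
  intro b b' hb
  cases a <;> cases b' <;> simp_all
  cases b <;> simp_all [Prod.Lex.toLex_le_toLex]

theorem lexProd_le_lexProd_of_lt_left {a a' : WithTop α} {b : WithTop β} (ha : a < a')
    (hb : b ≠ ⊤) (b' : WithTop β) : lexProd a b ≤ lexProd a' b' := by
  cases a' <;> cases b' <;> simp_all
  cases a <;> cases b <;> simp_all [Prod.Lex.toLex_le_toLex]

end WithTop

namespace HahnSeries

open WithTop

variable {Γ Γ' R : Type*}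

section OrderTop

variable [PartialOrder Γ]

theorem leadingCoeff_eq_coeff_of_orderTop_eq [Zero R] {x : R⟦Γ⟧} {g : Γ}
    (hx : x.orderTop = g) : x.leadingCoeff = x.coeff g := by
  rw [← coeff_untop_eq_leadingCoeff (hx ▸ coe_ne_top)]
  simp [hx]

theorem leadingCoeff_add_of_orderTop_eq [AddMonoid R] {x y : R⟦Γ⟧} {g : Γ}
    (hx : x.orderTop = g) (hy : y.orderTop = g) (hxy : (x + y).orderTop = g) :
    (x + y).leadingCoeff = x.leadingCoeff + y.leadingCoeff := by
  rw [leadingCoeff_eq_coeff_of_orderTop_eq hx, leadingCoeff_eq_coeff_of_orderTop_eq hy,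
    leadingCoeff_eq_coeff_of_orderTop_eq hxy, coeff_add]

end OrderTop

variable [LinearOrder Γ] [AddCancelCommMonoid Γ'] [LinearOrder Γ'] [IsOrderedAddMonoid Γ']
  [DivisionRing R] (v : AddValuation R (WithTop Γ'))

noncomputable def composedVal (x : R⟦Γ⟧) : WithTop (Γ ×ₗ Γ') :=
  lexProd x.orderTop (v x.leadingCoeff)

theorem composedVal_zero : composedVal v (0 : R⟦Γ⟧) = ⊤ := by
  simp [composedVal]

variable [AddCancelCommMonoid Γ]

theorem composedVal_one : composedVal v (1 : R⟦Γ⟧) = 0 := by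
  simp [composedVal, orderTop_one, leadingCoeff_one, lexProd_zero]

theorem min_composedVal_le_composedVal_add_of_orderTop_eq {x y : R⟦Γ⟧}
    (h : x.orderTop = y.orderTop) :
    min (composedVal v x) (composedVal v y) ≤ composedVal v (x + y) := by
  rcases eq_or_ne x 0 with rfl | hx
  · obtain rfl : y = 0 := orderTop_eq_top.mp (by simpa using h.symm)
    simp [composedVal_zero]
  have hgx : x.orderTop = x.order := (order_eq_orderTop_of_ne_zero hx).symm
  have hle : (x.order : WithTop Γ) ≤ (x + y).orderTop := by
    simpa [← h, hgx] using min_orderTop_le_orderTop_add (x := x) (y := y)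
  rcases hle.lt_or_eq with hlt | heq
  · refine (min_le_left _ _).trans ?_
    rw [composedVal, hgx]
    exact lexProd_le_lexProd_of_lt_left hlt (v.ne_top_iff.mpr (leadingCoeff_ne_zero.mpr hx)) _
  · have hlc := leadingCoeff_add_of_orderTop_eq hgx (h ▸ hgx) heq.symm
    rw [composedVal, composedVal, composedVal, ← h, ← heq, hgx, hlc,
      ← (lexProd_mono_right _).map_min]
    exact lexProd_mono_right _ (v.map_add _ _)

theorem min_composedVal_le_composedVal_add (x y : R⟦Γ⟧) :
    min (composedVal v x) (composedVal v y) ≤ composedVal v (x + y) := by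
  rcases lt_trichotomy x.orderTop y.orderTop with h | h | h
  · unfold composedVal
    rw [orderTop_add_eq_left h, leadingCoeff_add_eq_left h]
    exact min_le_left _ _
  · exact min_composedVal_le_composedVal_add_of_orderTop_eq v h
  · unfold composedVal
    rw [orderTop_add_eq_right h, leadingCoeff_add_eq_right h]
    exact min_le_right _ _

variable [IsOrderedCancelAddMonoid Γ]

theorem composedVal_mul (x y : R⟦Γ⟧) :
    composedVal v (x * y) = composedVal v x + composedVal v y := by
  simp only [composedVal, orderTop_mul, leadingCoeff_mul, v.map_mul, lexProd_add]

noncomputable def composedAddVal : AddValuation R⟦Γ⟧ (WithTop (Γ ×ₗ Γ')) :=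
  AddValuation.of (composedVal v) (composedVal_zero v) (composedVal_one v)
    (min_composedVal_le_composedVal_add v) (composedVal_mul v)

theorem composedAddVal_apply_of_ne_zero {x : R⟦Γ⟧} (hx : x ≠ 0) {γ' : Γ'}
    (hv : v (x.coeff x.order) = γ') : composedAddVal v x = (toLex (x.order, γ') : Γ ×ₗ Γ') := by
  rw [composedAddVal, AddValuation.of_apply, composedVal, ← order_eq_orderTop_of_ne_zero hx,
    leadingCoeff_eq, hv, lexProd_coe_coe]

theorem composedAddVal_C (r : R) :
    composedAddVal v (C r : R⟦Γ⟧) = (v r).map fun g => toLex ((0 : Γ), g) := by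
  rcases eq_or_ne r 0 with rfl | hr
  · simp [composedAddVal]
  · rw [composedAddVal, AddValuation.of_apply, composedVal, C_apply, orderTop_single hr,
      leadingCoeff_of_single, lexProd_coe_left]

end HahnSeries

/-- The composed valuation on the Hahn series field F = M((t^Γ)): there is a valuation
w on F with value group Γ ×_lex Γ' (Γ-coordinate dominating), given on a nonzero
series by the pair (order, v(leading coefficient)), and extending v on constants. -/
theorem stmt_17 {Γ Γ' : Type*} [AddCommGroup Γ] [LinearOrder Γ] [IsOrderedAddMonoid Γ]
    [AddCommGroup Γ'] [LinearOrder Γ'] [IsOrderedAddMonoid Γ']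
    {M : Type*} [Field M] (v : AddValuation M (WithTop Γ')) :
    ∃ w : AddValuation (HahnSeries Γ M) (WithTop (Lex (Γ × Γ'))),
      (∀ f : HahnSeries Γ M, f ≠ 0 → ∀ γ' : Γ', v (f.coeff f.order) = (γ' : WithTop Γ') →
        w f = ((toLex (f.order, γ') : Lex (Γ × Γ')) : WithTop (Lex (Γ × Γ')))) ∧
      (∀ x : M, w (HahnSeries.C x) =
        WithTop.map (fun g : Γ' => toLex ((0 : Γ), g)) (v x)) :=
  ⟨HahnSeries.composedAddVal v,
    fun _ hf _ hv => HahnSeries.composedAddVal_apply_of_ne_zero v hf hv,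
    HahnSeries.composedAddVal_C v⟩
end
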